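/- Let F be a function from 4×4 density matrices to nonnegative reals that is convex (F(Σᵢ pᵢ ρᵢ) ≤ Σᵢ pᵢ F(ρᵢ) for every finite convex combination of density matrices) and monotone under real operations (F(Λ(ρ)) ≤ F(ρ) whenever Λ(ρ) = Σₘ Kₘ ρ Kₘ† with all Kₘ having real entries and Σₘ Kₘ†Kₘ = I). Then for every separable two-qubit state ρ = Σᵢ pᵢ σᵢ ⊗ τᵢ (pᵢ ≥ 0, Σᵢ pᵢ = 1, σᵢ, τᵢ 2×2 density matrices), F(ρ) ≤ F(M₊ ⊗ M₊), where M₊ = (1/2)[[1, −i],[i, 1]]. -/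

import Mathlib

open Matrix Kronecker BigOperators
open scoped ComplexOrder

noncomputable section

/-- A density matrix: positive semidefinite with trace 1. -/
def IsDensityMatrix {n : Type*} [Fintype n] [DecidableEq n] (ρ : Matrix n n ℂ) : Prop :=
  ρ.PosSemidef ∧ ρ.trace = 1

/-- The l₁-norm imaginarity measure: sum of |Im ρᵢⱼ| over off-diagonal entries. -/
noncomputable def Fl1 {n : Type*} [Fintype n] [DecidableEq n] (ρ : Matrix n n ℂ) : ℝ :=
  ∑ i, ∑ j, if i = j then 0 else |(ρ i j).im|

/-- The square root of a positive semidefinite matrix (removed from Mathlib; restored with its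
Dec 2024 definition). -/
noncomputable def Matrix.PosSemidef.sqrt {n : Type*} [Fintype n] [DecidableEq n] {A : Matrix n n ℂ}
    (hA : A.PosSemidef) : Matrix n n ℂ :=
  (hA.1.eigenvectorUnitary : Matrix n n ℂ) *
    diagonal (fun i => ((Real.sqrt (hA.1.eigenvalues i) : ℝ) : ℂ)) *
    (star hA.1.eigenvectorUnitary : Matrix n n ℂ)

/-- The trace norm ‖M‖₁ = Tr √(M†M). -/
noncomputable def traceNorm {n : Type*} [Fintype n] [DecidableEq n] (M : Matrix n n ℂ) : ℝ :=
  ((Matrix.posSemidef_conjTranspose_mul_self M).sqrt.trace).re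

/-- The robustness of imaginarity: (1/2)‖ρ − ρᵀ‖₁. -/
noncomputable def FR {n : Type*} [Fintype n] [DecidableEq n] (ρ : Matrix n n ℂ) : ℝ :=
  traceNorm (ρ - ρᵀ) / 2

/-- Von Neumann entropy (base-2), via eigenvalues of a Hermitian matrix
(junk value 0 if not Hermitian). -/
noncomputable def vnEntropy {n : Type*} [Fintype n] [DecidableEq n] (σ : Matrix n n ℂ) : ℝ :=
  if h : σ.IsHermitian then -∑ j, (h.eigenvalues j) * Real.logb 2 (h.eigenvalues j) else 0

/-- The relative entropy of imaginarity: S(Re ρ) − S(ρ), Re ρ = (ρ + ρᵀ)/2. -/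
noncomputable def Fr {n : Type*} [Fintype n] [DecidableEq n] (ρ : Matrix n n ℂ) : ℝ :=
  vnEntropy ((1/2 : ℂ) • (ρ + ρᵀ)) - vnEntropy ρ

/-- The canonical single-qubit state ρ_A. -/
noncomputable def rhoA (A : ℝ) : Matrix (Fin 2) (Fin 2) ℂ :=
  !![(((1 + A) / 2 : ℝ) : ℂ), -(Complex.I / 2) * (Real.sqrt (1 - A ^ 2) : ℂ);
     (Complex.I / 2) * (Real.sqrt (1 - A ^ 2) : ℂ), (((1 - A) / 2 : ℝ) : ℂ)]

/-- Density matrix of the maximal imaginary state |+⟩ = (|0⟩ + i|1⟩)/√2. -/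
noncomputable def Mplus : Matrix (Fin 2) (Fin 2) ℂ :=
  (1/2 : ℂ) • !![1, -Complex.I; Complex.I, 1]

/-! Every qubit state is the image of `M₊` under a real operation: writing `σ = ∑ₖ vₖ vₖ†`, the
real operators `[Re vₖ, Im vₖ]` and `[-Im vₖ, Re vₖ]` send `|+⟩` to `vₖ/√2` and `i vₖ/√2`, and their
`Kᴴ K` add up to `‖vₖ‖² • 1`. Tensoring two such operations, every product state `σ ⊗ τ` is a real
image of `M₊ ⊗ M₊`, so monotonicity bounds `F (σ ⊗ τ)` by `F (M₊ ⊗ M₊)` and convexity extends the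
bound to separable states. -/

variable {ι κ l m n p : Type*} [Fintype ι] [Fintype κ]

def IsRealKraus [Fintype m] [DecidableEq n] (K : ι → Matrix m n ℂ) : Prop :=
  (∀ a i j, (K a i j).im = 0) ∧ ∑ a, (K a)ᴴ * K a = 1

def krausMap [Fintype n] (K : ι → Matrix m n ℂ) (ρ : Matrix n n ℂ) : Matrix m m ℂ :=
  ∑ a, K a * ρ * (K a)ᴴ

lemma IsRealKraus.comp_equiv [Fintype m] [DecidableEq n] {K : ι → Matrix m n ℂ}
    (hK : IsRealKraus K) (e : κ ≃ ι) : IsRealKraus (K ∘ e) :=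
  ⟨fun a => hK.1 (e a), by rw [← hK.2, ← e.sum_comp]; rfl⟩

lemma krausMap_comp_equiv [Fintype n] (K : ι → Matrix m n ℂ) (e : κ ≃ ι) :
    krausMap (K ∘ e) = krausMap K := by
  ext1 ρ; exact e.sum_comp fun a => K a * ρ * (K a)ᴴ

lemma sum_kronecker_sum {R : Type*} [CommSemiring R] (M : ι → Matrix l m R)
    (N : κ → Matrix n p R) :
    (∑ a, M a) ⊗ₖ (∑ b, N b) = ∑ ab : ι × κ, M ab.1 ⊗ₖ N ab.2 := by
  ext ⟨i, j⟩ ⟨k, l⟩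
  simp [kroneckerMap_apply, Matrix.sum_apply, Finset.sum_mul_sum, Fintype.sum_prod_type]

lemma IsRealKraus.kronecker [Fintype l] [Fintype n] [DecidableEq m] [DecidableEq p]
    {K : ι → Matrix l m ℂ} {L : κ → Matrix n p ℂ} (hK : IsRealKraus K) (hL : IsRealKraus L) :
    IsRealKraus fun ab : ι × κ => K ab.1 ⊗ₖ L ab.2 := by
  refine ⟨fun ab i j => ?_, ?_⟩
  · simp [kroneckerMap_apply, Complex.mul_im, hK.1, hL.1]
  · calc ∑ ab : ι × κ, (K ab.1 ⊗ₖ L ab.2)ᴴ * (K ab.1 ⊗ₖ L ab.2)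
        = (∑ a, (K a)ᴴ * K a) ⊗ₖ ∑ b, (L b)ᴴ * L b := by
          simp_rw [sum_kronecker_sum, conjTranspose_kronecker, mul_kronecker_mul]
      _ = 1 := by rw [hK.2, hL.2, one_kronecker_one]

lemma krausMap_kronecker [Fintype m] [Fintype p] (K : ι → Matrix l m ℂ) (L : κ → Matrix n p ℂ)
    (ρ : Matrix m m ℂ) (σ : Matrix p p ℂ) :
    krausMap (fun ab : ι × κ => K ab.1 ⊗ₖ L ab.2) (ρ ⊗ₖ σ) = krausMap K ρ ⊗ₖ krausMap L σ := by
  simp_rw [krausMap, sum_kronecker_sum, conjTranspose_kronecker, mul_kronecker_mul]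

lemma IsDensityMatrix.kronecker [Fintype m] [Fintype n] [DecidableEq m] [DecidableEq n]
    {ρ : Matrix m m ℂ} {σ : Matrix n n ℂ}
    (hρ : IsDensityMatrix ρ) (hσ : IsDensityMatrix σ) : IsDensityMatrix (ρ ⊗ₖ σ) :=
  ⟨hρ.1.kronecker hσ.1, by rw [trace_kronecker, hρ.2, hσ.2, mul_one]⟩

lemma Mplus_eq_smul_conjTranspose_mul_self :
    Mplus = (1 / 2 : ℂ) • ((!![1, -Complex.I; 0, 0])ᴴ * !![1, -Complex.I; 0, 0]) := by
  ext i j; fin_cases i <;> fin_cases j <;> simp [Mplus, Matrix.mul_apply, Fin.sum_univ_two]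

lemma isDensityMatrix_Mplus : IsDensityMatrix Mplus := by
  refine ⟨?_, ?_⟩
  · rw [Mplus_eq_smul_conjTranspose_mul_self]
    exact (posSemidef_conjTranspose_mul_self _).smul (by norm_num [Complex.le_def])
  · norm_num [Mplus, Matrix.trace, Fin.sum_univ_two]

def realKrausOfVec (v : n → ℂ) (t : Fin 2) : Matrix n (Fin 2) ℂ :=
  Matrix.of fun i j => ((![![(v i).re, (v i).im], ![-(v i).im, (v i).re]] t j : ℝ) : ℂ)

lemma realKrausOfVec_im (v : n → ℂ) (t : Fin 2) (i : n) (j : Fin 2) :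
    (realKrausOfVec v t i j).im = 0 :=
  Complex.ofReal_im _

lemma sum_conjTranspose_realKrausOfVec_mul [Fintype n] (v : n → ℂ) :
    ∑ t, (realKrausOfVec v t)ᴴ * realKrausOfVec v t = (v ⬝ᵥ star v) • 1 := by
  ext j k
  fin_cases j <;> fin_cases k <;>
    simp [realKrausOfVec, Matrix.mul_apply, Fin.sum_univ_two, dotProduct, Complex.ext_iff,
      Finset.sum_add_distrib, mul_comm, add_comm]

lemma krausMap_realKrausOfVec_Mplus [Fintype n] (v : n → ℂ) :
    krausMap (realKrausOfVec v) Mplus = vecMulVec v (star v) := by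
  ext i j
  simp [krausMap, realKrausOfVec, Mplus, Matrix.mul_apply, Fin.sum_univ_two, vecMulVec_apply,
    Complex.ext_iff]
  constructor <;> ring

theorem exists_isRealKraus_krausMap_Mplus_eq [Fintype n] [DecidableEq n]
    {σ : Matrix n n ℂ} (hσ : IsDensityMatrix σ) :
    ∃ (r : ℕ) (K : Fin r × Fin 2 → Matrix n (Fin 2) ℂ), IsRealKraus K ∧ krausMap K Mplus = σ := by
  obtain ⟨r, v, rfl⟩ := posSemidef_iff_eq_sum_vecMulVec.mp hσ.1
  refine ⟨r, fun kt => realKrausOfVec (v kt.1) kt.2, ⟨fun kt => realKrausOfVec_im _ _, ?_⟩, ?_⟩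
  · rw [Fintype.sum_prod_type]
    simp_rw [sum_conjTranspose_realKrausOfVec_mul, ← Finset.sum_smul, ← trace_vecMulVec,
      ← trace_sum, hσ.2, one_smul]
  · rw [krausMap, Fintype.sum_prod_type]
    exact Finset.sum_congr rfl fun k _ => krausMap_realKrausOfVec_Mplus (v k)

theorem exists_isRealKraus_krausMap_Mplus_kronecker_Mplus_eq [Fintype m] [Fintype n]
    [DecidableEq m] [DecidableEq n] {σ : Matrix m m ℂ} {τ : Matrix n n ℂ}
    (hσ : IsDensityMatrix σ) (hτ : IsDensityMatrix τ) :
    ∃ (N : ℕ) (K : Fin N → Matrix (m × n) (Fin 2 × Fin 2) ℂ),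
      IsRealKraus K ∧ krausMap K (Mplus ⊗ₖ Mplus) = σ ⊗ₖ τ := by
  obtain ⟨r, K, hK, hKσ⟩ := exists_isRealKraus_krausMap_Mplus_eq hσ
  obtain ⟨r', L, hL, hLτ⟩ := exists_isRealKraus_krausMap_Mplus_eq hτ
  let e := Fintype.equivFin ((Fin r × Fin 2) × (Fin r' × Fin 2))
  refine ⟨_, (fun ab => K ab.1 ⊗ₖ L ab.2) ∘ e.symm, (hK.kronecker hL).comp_equiv _, ?_⟩
  rw [krausMap_comp_equiv, krausMap_kronecker, hKσ, hLτ]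

theorem separable_measure_le_maximal_imaginary_general
    (F : Matrix (Fin 2 × Fin 2) (Fin 2 × Fin 2) ℂ → ℝ)
    (hconvex : ∀ (s : ℕ) (p : Fin s → ℝ)
      (ρs : Fin s → Matrix (Fin 2 × Fin 2) (Fin 2 × Fin 2) ℂ),
      (∀ i, 0 ≤ p i) → ((∑ i, p i) = 1) → (∀ i, IsDensityMatrix (ρs i)) →
      F (∑ i, (p i : ℂ) • ρs i) ≤ ∑ i, p i * F (ρs i))
    (hmono : ∀ (N : ℕ) (K : Fin N → Matrix (Fin 2 × Fin 2) (Fin 2 × Fin 2) ℂ),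
      (∀ m i j, (K m i j).im = 0) → ((∑ m, (K m)ᴴ * K m) = 1) →
      ∀ ρ, IsDensityMatrix ρ → F (∑ m, K m * ρ * (K m)ᴴ) ≤ F ρ)
    (s : ℕ) (p : Fin s → ℝ) (σ τ : Fin s → Matrix (Fin 2) (Fin 2) ℂ)
    (hp : ∀ i, 0 ≤ p i) (hpsum : (∑ i, p i) = 1)
    (hσ : ∀ i, IsDensityMatrix (σ i)) (hτ : ∀ i, IsDensityMatrix (τ i)) :
    F (∑ i, (p i : ℂ) • (σ i ⊗ₖ τ i)) ≤ F (Mplus ⊗ₖ Mplus) := by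
  have hproduct (i : Fin s) : F (σ i ⊗ₖ τ i) ≤ F (Mplus ⊗ₖ Mplus) := by
    obtain ⟨N, K, hK, hKMplus⟩ :=
      exists_isRealKraus_krausMap_Mplus_kronecker_Mplus_eq (hσ i) (hτ i)
    rw [← hKMplus]
    exact hmono N K hK.1 hK.2 _ (isDensityMatrix_Mplus.kronecker isDensityMatrix_Mplus)
  calc F (∑ i, (p i : ℂ) • (σ i ⊗ₖ τ i))
      ≤ ∑ i, p i * F (σ i ⊗ₖ τ i) :=
        hconvex s p _ hp hpsum fun i => (hσ i).kronecker (hτ i)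
    _ ≤ ∑ i, p i * F (Mplus ⊗ₖ Mplus) :=
        Finset.sum_le_sum fun i _ => mul_le_mul_of_nonneg_left (hproduct i) (hp i)
    _ = F (Mplus ⊗ₖ Mplus) := by rw [← Finset.sum_mul, hpsum, one_mul]

/-- for any convex measure monotone under real operations, the value on
any separable two-qubit state is at most the value on M₊ ⊗ M₊. -/
theorem separable_measure_le_maximal_imaginary
    (F : Matrix (Fin 2 × Fin 2) (Fin 2 × Fin 2) ℂ → ℝ)
    (hnonneg : ∀ ρ, IsDensityMatrix ρ → 0 ≤ F ρ)
    (hconvex : ∀ (s : ℕ) (p : Fin s → ℝ)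
      (ρs : Fin s → Matrix (Fin 2 × Fin 2) (Fin 2 × Fin 2) ℂ),
      (∀ i, 0 ≤ p i) → ((∑ i, p i) = 1) → (∀ i, IsDensityMatrix (ρs i)) →
      F (∑ i, (p i : ℂ) • ρs i) ≤ ∑ i, p i * F (ρs i))
    (hmono : ∀ (N : ℕ) (K : Fin N → Matrix (Fin 2 × Fin 2) (Fin 2 × Fin 2) ℂ),
      (∀ m i j, (K m i j).im = 0) → ((∑ m, (K m)ᴴ * K m) = 1) →
      ∀ ρ, IsDensityMatrix ρ → F (∑ m, K m * ρ * (K m)ᴴ) ≤ F ρ)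
    (s : ℕ) (p : Fin s → ℝ) (σ τ : Fin s → Matrix (Fin 2) (Fin 2) ℂ)
    (hp : ∀ i, 0 ≤ p i) (hpsum : (∑ i, p i) = 1)
    (hσ : ∀ i, IsDensityMatrix (σ i)) (hτ : ∀ i, IsDensityMatrix (τ i)) :
    F (∑ i, (p i : ℂ) • (σ i ⊗ₖ τ i)) ≤ F (Mplus ⊗ₖ Mplus) :=
  separable_measure_le_maximal_imaginary_general F hconvex hmono s p σ τ hp hpsum hσ hτ
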